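/- A nontrivial free group F has an element of positive stable commutator length; in particular the commutator [a,b] of two free generators a, b of the free group on two generators has stable commutator length 1/2 > 0, so F is not uniformly perfect on its commutator subgroup. -/

import Mathlib

open scoped commutatorElement

/-- `g` is a product of `N` commutators. -/
def IsProdOfCommutators {G : Type*} [Group G] (g : G) (N : ℕ) : Prop :=
  ∃ f : Fin N → G × G, g = (List.ofFn fun i => ⁅(f i).1, (f i).2⁆).prod

/-- The commutator length of `g`: the least `N` such that `g` is a product of
`N` commutators. -/
noncomputable def commLength {G : Type*} [Group G] (g : G) : ℕ :=
  sInf {N | IsProdOfCommutators g N}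

/-- The stable commutator length, which by Fekete's subadditivity lemma equals
the limit of `commLength (g ^ n) / n`. -/
noncomputable def scl {G : Type*} [Group G] (g : G) : ℝ :=
  ⨅ n : ℕ, (commLength (g ^ (n + 1)) : ℝ) / (n + 1)

/-!
Upper bound (Culler): with `t = b⁻¹ a b a⁻¹`, conjugation by powers of `t` lets every two
further factors of `⁅a, b⁆` be absorbed at the cost of one commutator, so `⁅a, b⁆ ^ (2k + 1)` is
a product of `k + 1` commutators in any group.

Lower bound: send `F₂` to the group of lifts of orientation-preserving circle homeomorphisms. A
commutator `f g f⁻¹ g⁻¹` there moves every point by less than `2`, since `f g f⁻¹` and `g⁻¹` have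
opposite translation numbers and every lift `h` moves points by less than `τ h + 1`. Hence a product
of `N` commutators has translation number at most `2N`. For a representation in which the image of
`⁅a, b⁆` has translation number `1`, this gives `m ≤ 2 · commLength (⁅a, b⁆ ^ m)`.
-/

section IsProdOfCommutators

variable {G H : Type*} [Group G] [Group H] {g : G} {N : ℕ}

theorem isProdOfCommutators_zero : IsProdOfCommutators g 0 ↔ g = 1 := by
  simp [IsProdOfCommutators]

theorem isProdOfCommutators_succ :
    IsProdOfCommutators g (N + 1) ↔ ∃ a b h : G, IsProdOfCommutators h N ∧ g = ⁅a, b⁆ * h := by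
  constructor
  · rintro ⟨f, rfl⟩
    exact ⟨(f 0).1, (f 0).2, _, ⟨fun i => f i.succ, rfl⟩, by rw [List.ofFn_succ, List.prod_cons]⟩
  · rintro ⟨a, b, h, ⟨f, rfl⟩, rfl⟩
    exact ⟨Fin.cons (a, b) f, by rw [List.ofFn_succ, List.prod_cons]; simp⟩

theorem IsProdOfCommutators.commutator_mul (hg : IsProdOfCommutators g N) (a b : G) :
    IsProdOfCommutators (⁅a, b⁆ * g) (N + 1) :=
  isProdOfCommutators_succ.2 ⟨a, b, g, hg, rfl⟩

theorem IsProdOfCommutators.map (hg : IsProdOfCommutators g N) (φ : G →* H) :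
    IsProdOfCommutators (φ g) N := by
  induction N generalizing g with
  | zero => rw [isProdOfCommutators_zero] at hg ⊢; simp [hg]
  | succ N ih =>
    obtain ⟨a, b, h, hh, rfl⟩ := isProdOfCommutators_succ.1 hg
    rw [map_mul, map_commutatorElement]
    exact (ih hh).commutator_mul _ _

theorem isProdOfCommutators_commutator_pow (a b : G) (m : ℕ) :
    IsProdOfCommutators (⁅a, b⁆ ^ m) m := by
  induction m with
  | zero => simp [isProdOfCommutators_zero]
  | succ m ih => rw [pow_succ']; exact ih.commutator_mul a b

end IsProdOfCommutators

section commutatorPow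

variable {G : Type*} [Group G]

theorem commutator_sq_mul_commutator (a b s : G) (hs : Commute s (b⁻¹ * a * b * a⁻¹)) :
    ⁅a, b⁆ ^ 2 * ⁅a * b * a⁻¹, s * a⁻¹⁆ =
      ⁅a * b * a⁻¹, s * (b⁻¹ * a * b * a⁻¹) * a⁻¹⁆ * ⁅s * (b⁻¹ * a) * s⁻¹, s * b ^ 2 * s⁻¹⁆ := by
  calc ⁅a, b⁆ ^ 2 * ⁅a * b * a⁻¹, s * a⁻¹⁆
      = a * b * a⁻¹ * (b⁻¹ * a * b * a⁻¹ * (b⁻¹ * a * b * a⁻¹) * s) * b⁻¹ * s⁻¹ := by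
        rw [sq]; group
    _ = a * b * a⁻¹ * (s * (b⁻¹ * a * b * a⁻¹ * (b⁻¹ * a * b * a⁻¹))) * b⁻¹ * s⁻¹ := by
        rw [(hs.mul_right hs).eq]
    _ = _ := by group

theorem isProdOfCommutators_commutator_pow_two_mul_add_one (a b : G) (k : ℕ) :
    IsProdOfCommutators (⁅a, b⁆ ^ (2 * k + 1)) (k + 1) := by
  set t := b⁻¹ * a * b * a⁻¹
  suffices ∀ n : ℕ, ∃ h : G, IsProdOfCommutators h n ∧
      ⁅a, b⁆ ^ (2 * n + 1) = ⁅a * b * a⁻¹, t ^ n * a⁻¹⁆ * h by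
    obtain ⟨h, hh, hk⟩ := this k
    rw [hk]
    exact hh.commutator_mul _ _
  intro n
  induction n with
  | zero => exact ⟨1, isProdOfCommutators_zero.2 rfl, by group⟩
  | succ n ih =>
    obtain ⟨h, hh, hk⟩ := ih
    refine ⟨⁅t ^ n * (b⁻¹ * a) * (t ^ n)⁻¹, t ^ n * b ^ 2 * (t ^ n)⁻¹⁆ * h,
      hh.commutator_mul _ _, ?_⟩
    rw [show 2 * (n + 1) + 1 = 2 + (2 * n + 1) by ring, pow_add, hk, ← mul_assoc,
      commutator_sq_mul_commutator a b _ (Commute.self_pow t n).symm, pow_succ t n, mul_assoc]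

end commutatorPow

section commLength

variable {G : Type*} [Group G] {g : G} {N : ℕ}

theorem isProdOfCommutators_commLength (hg : IsProdOfCommutators g N) :
    IsProdOfCommutators g (commLength g) :=
  Nat.sInf_mem (s := {N | IsProdOfCommutators g N}) ⟨N, hg⟩

theorem le_scl {r : ℝ} (h : ∀ n : ℕ, r * (n + 1) ≤ commLength (g ^ (n + 1))) : r ≤ scl g :=
  le_ciInf fun n => (le_div_iff₀ (by positivity)).2 (h n)

theorem scl_le_of_isProdOfCommutators {n : ℕ} (h : IsProdOfCommutators (g ^ (n + 1)) N) :
    scl g ≤ N / (n + 1) := by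
  refine (ciInf_le ⟨0, ?_⟩ n).trans ?_
  · rintro _ ⟨m, rfl⟩
    positivity
  · gcongr
    exact_mod_cast Nat.sInf_le h

open Filter Topology in
theorem scl_commutator_le_one_half (a b : G) : scl ⁅a, b⁆ ≤ 1 / 2 := by
  have hlim : Tendsto (fun k : ℕ => 1 / 2 + 1 / ((k : ℝ) + 1)) atTop (𝓝 (1 / 2)) := by
    simpa using tendsto_one_div_add_atTop_nhds_zero_nat.const_add (1 / 2 : ℝ)
  refine ge_of_tendsto' hlim fun k => (scl_le_of_isProdOfCommutators
    (isProdOfCommutators_commutator_pow_two_mul_add_one a b k)).trans ?_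
  rw [div_le_iff₀ (by positivity)]
  push_cast
  field_simp
  nlinarith

end commLength

open Set

namespace CircleDeg1Lift

theorem commutator_apply_lt (f g : CircleDeg1Liftˣ) (x : ℝ) :
    (⁅f, g⁆ : CircleDeg1Liftˣ) x < x + 2 := by
  have hconj :=
    map_lt_add_translationNumber_add_one (↑f * ↑g * ↑f⁻¹) ((g⁻¹ : CircleDeg1Liftˣ) x)
  have hinv := map_lt_add_translationNumber_add_one (↑g⁻¹ : CircleDeg1Lift) x
  rw [translationNumber_conj_eq] at hconj
  rw [translationNumber_units_inv] at hinv
  calc (⁅f, g⁆ : CircleDeg1Liftˣ) x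
      = (↑f * ↑g * ↑f⁻¹ : CircleDeg1Lift) ((g⁻¹ : CircleDeg1Liftˣ) x) := rfl
    _ < x + 2 := by linarith

theorem apply_le_of_isProdOfCommutators {h : CircleDeg1Liftˣ} {N : ℕ}
    (hN : IsProdOfCommutators h N) (x : ℝ) : h x ≤ x + 2 * N := by
  induction N generalizing h x with
  | zero => simp [isProdOfCommutators_zero.1 hN]
  | succ N ih =>
    obtain ⟨a, b, h, hh, rfl⟩ := isProdOfCommutators_succ.1 hN
    have := commutator_apply_lt a b (h x)
    have := ih hh x
    rw [Units.val_mul, mul_apply]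
    push_cast
    linarith

theorem translationNumber_le_of_isProdOfCommutators {h : CircleDeg1Liftˣ} {N : ℕ}
    (hN : IsProdOfCommutators h N) : translationNumber h ≤ 2 * N :=
  translationNumber_le_of_le_add _ (apply_le_of_isProdOfCommutators hN)

noncomputable def ofIco (F : ℝ → ℝ) (hF : MonotoneOn F (Ico 0 1))
    (hF' : MapsTo F (Ico 0 1) (Ico 0 1)) : CircleDeg1Lift where
  toFun x := ⌊x⌋ + F (Int.fract x)
  monotone' x y hxy := by
    dsimp only
    rcases (Int.floor_le_floor hxy).lt_or_eq with hlt | heq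
    · have h1 := (hF' ⟨Int.fract_nonneg x, Int.fract_lt_one x⟩).2
      have h2 := (hF' ⟨Int.fract_nonneg y, Int.fract_lt_one y⟩).1
      have : (⌊x⌋ : ℝ) + 1 ≤ ⌊y⌋ := by exact_mod_cast hlt
      linarith
    · have : Int.fract x ≤ Int.fract y := by
        rw [Int.fract, Int.fract, heq]; linarith
      rw [heq]
      gcongr
      exact hF ⟨Int.fract_nonneg x, Int.fract_lt_one x⟩ ⟨Int.fract_nonneg y, Int.fract_lt_one y⟩
        this
  map_add_one' x := by simp only [Int.floor_add_one, Int.fract_add_one]; push_cast; ring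

variable {F G : ℝ → ℝ} {hF : MonotoneOn F (Ico 0 1)} {hF' : MapsTo F (Ico 0 1) (Ico 0 1)}
  {hG : MonotoneOn G (Ico 0 1)} {hG' : MapsTo G (Ico 0 1) (Ico 0 1)}

theorem ofIco_apply (x : ℝ) : ofIco F hF hF' x = ⌊x⌋ + F (Int.fract x) := rfl

theorem ofIco_apply_of_mem {x : ℝ} (hx : x ∈ Ico 0 1) : ofIco F hF hF' x = F x := by
  rw [ofIco_apply, Int.floor_eq_zero_iff.2 hx, Int.fract_eq_self.2 hx, Int.cast_zero, zero_add]

theorem ofIco_mul_ofIco (hFG : ∀ t ∈ Ico 0 1, F (G t) = t) :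
    ofIco F hF hF' * ofIco G hG hG' = 1 := by
  ext x
  have hx : Int.fract x ∈ Ico 0 1 := ⟨Int.fract_nonneg x, Int.fract_lt_one x⟩
  have hfloor : ⌊(⌊x⌋ : ℝ) + G (Int.fract x)⌋ = ⌊x⌋ := by
    rw [add_comm, Int.floor_add_intCast, Int.floor_eq_zero_iff.2 (hG' hx), zero_add]
  have hfract : Int.fract ((⌊x⌋ : ℝ) + G (Int.fract x)) = G (Int.fract x) := by
    rw [add_comm, Int.fract_add_intCast, Int.fract_eq_self.2 (hG' hx)]
  rw [mul_apply, ofIco_apply, ofIco_apply, hfloor, hfract, hFG _ hx, coe_one, id,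
    Int.floor_add_fract]

noncomputable def unitsOfIco (F G : ℝ → ℝ) (hF : MonotoneOn F (Ico 0 1))
    (hF' : MapsTo F (Ico 0 1) (Ico 0 1)) (hG : MonotoneOn G (Ico 0 1))
    (hG' : MapsTo G (Ico 0 1) (Ico 0 1)) (hFG : ∀ t ∈ Ico 0 1, F (G t) = t)
    (hGF : ∀ t ∈ Ico 0 1, G (F t) = t) : CircleDeg1Liftˣ where
  val := ofIco F hF hF'
  inv := ofIco G hG hG'
  val_inv := ofIco_mul_ofIco hFG
  inv_val := ofIco_mul_ofIco hGF

end CircleDeg1Lift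

/-- The piecewise affine map of `[0, 1]` fixing `0` and `1` and sending `p` to `q`. -/
noncomputable def breakMap (p q t : ℝ) : ℝ :=
  if t ≤ p then q * (t / p) else q + (1 - q) * ((t - p) / (1 - p))

section breakMap

variable {p q : ℝ} (hp : p ∈ Ioo 0 1) (hq : q ∈ Ioo 0 1)
include hp hq

theorem breakMap_monotoneOn : MonotoneOn (breakMap p q) (Ico 0 1) := by
  obtain ⟨hp0, hp1⟩ := hp
  obtain ⟨hq0, hq1⟩ := hq
  intro s _ t _ hst
  unfold breakMap
  split_ifs with hs ht ht
  · gcongr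
  · have := mul_le_of_le_one_right hq0.le (div_le_one_of_le₀ hs hp0.le)
    have : 0 ≤ (t - p) / (1 - p) := div_nonneg (by linarith) (by linarith)
    nlinarith
  · linarith
  · gcongr

theorem breakMap_mapsTo : MapsTo (breakMap p q) (Ico 0 1) (Ico 0 1) := by
  obtain ⟨hp0, hp1⟩ := hp
  obtain ⟨hq0, hq1⟩ := hq
  rintro t ⟨ht0, ht1⟩
  unfold breakMap
  split_ifs with ht
  · have := mul_le_of_le_one_right hq0.le (div_le_one_of_le₀ ht hp0.le)
    exact ⟨by positivity, by linarith⟩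
  · have h0 : 0 ≤ (t - p) / (1 - p) := div_nonneg (by linarith) (by linarith)
    have h1 : (t - p) / (1 - p) < 1 := (div_lt_one (by linarith)).2 (by linarith)
    exact ⟨by nlinarith, by nlinarith⟩

theorem breakMap_breakMap (t : ℝ) : breakMap q p (breakMap p q t) = t := by
  obtain ⟨hp0, hp1⟩ := hp
  obtain ⟨hq0, hq1⟩ := hq
  unfold breakMap
  split_ifs with ht hq' hq'
  · field_simp
  · exact absurd (mul_le_of_le_one_right hq0.le (div_le_one_of_le₀ ht hp0.le)) hq'
  · have : 0 < (t - p) / (1 - p) := div_pos (by linarith) (by linarith)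
    nlinarith
  · field_simp
    ring

end breakMap

noncomputable def breakUnit {p q : ℝ} (hp : p ∈ Ioo 0 1) (hq : q ∈ Ioo 0 1) : CircleDeg1Liftˣ :=
  CircleDeg1Lift.unitsOfIco (breakMap p q) (breakMap q p) (breakMap_monotoneOn hp hq)
    (breakMap_mapsTo hp hq) (breakMap_monotoneOn hq hp) (breakMap_mapsTo hq hp)
    (fun t _ => breakMap_breakMap hq hp t) (fun t _ => breakMap_breakMap hp hq t)

/-- The constants are chosen so that the images `f, g` of the generators satisfy
`f (g 0) = 11/8 = g (f 0) + 1`. -/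
noncomputable def freeGroupToCircleDeg1Lift : FreeGroup (Fin 2) →* CircleDeg1Liftˣ :=
  FreeGroup.lift ![CircleDeg1Lift.translate (Multiplicative.ofAdd (1 / 2)) *
      breakUnit (by norm_num : (1 / 4 : ℝ) ∈ Ioo 0 1) (by norm_num : (7 / 8 : ℝ) ∈ Ioo 0 1),
    CircleDeg1Lift.translate (Multiplicative.ofAdd (1 / 4)) *
      breakUnit (by norm_num : (1 / 2 : ℝ) ∈ Ioo 0 1) (by norm_num : (1 / 8 : ℝ) ∈ Ioo 0 1)]

theorem translationNumber_freeGroupToCircleDeg1Lift_commutator :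
    (freeGroupToCircleDeg1Lift ⁅FreeGroup.of (0 : Fin 2), FreeGroup.of 1⁆ :
      CircleDeg1Lift).translationNumber = 1 := by
  rw [map_commutatorElement]
  set f := freeGroupToCircleDeg1Lift (FreeGroup.of 0)
  set g := freeGroupToCircleDeg1Lift (FreeGroup.of 1)
  have hf : ∀ x ∈ Ico (0 : ℝ) 1, f x = 1 / 2 + breakMap (1 / 4) (7 / 8) x := fun x hx => by
    simp [f, freeGroupToCircleDeg1Lift, breakUnit, CircleDeg1Lift.unitsOfIco,
      CircleDeg1Lift.ofIco_apply_of_mem hx]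
  have hg : ∀ x ∈ Ico (0 : ℝ) 1, g x = 1 / 4 + breakMap (1 / 2) (1 / 8) x := fun x hx => by
    simp [g, freeGroupToCircleDeg1Lift, breakUnit, CircleDeg1Lift.unitsOfIco,
      CircleDeg1Lift.ofIco_apply_of_mem hx]
  have hfg : f (g 0) = 11 / 8 := by
    rw [hg 0 (by norm_num), hf _ (by norm_num [breakMap])]; norm_num [breakMap]
  have hgf : g (f 0) = 3 / 8 := by
    rw [hf 0 (by norm_num), hg _ (by norm_num [breakMap])]; norm_num [breakMap]
  have hcomm : (⁅f, g⁆ : CircleDeg1Liftˣ) (g (f 0)) = f (g 0) := by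
    change ((⁅f, g⁆ * (g * f) : CircleDeg1Liftˣ) : CircleDeg1Lift) 0 = _
    rw [show ⁅f, g⁆ * (g * f) = f * g by group]
    rfl
  have : (⁅f, g⁆ : CircleDeg1Liftˣ) (3 / 8) = 3 / 8 + (1 : ℤ) := by
    rw [← hgf, hcomm, hfg, hgf]
    norm_num
  exact_mod_cast CircleDeg1Lift.translationNumber_of_eq_add_int _ this

theorem le_two_mul_of_isProdOfCommutators_commutator_pow {m N : ℕ}
    (h : IsProdOfCommutators (⁅FreeGroup.of (0 : Fin 2), FreeGroup.of (1 : Fin 2)⁆ ^ m) N) :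
    m ≤ 2 * N := by
  have :=
    CircleDeg1Lift.translationNumber_le_of_isProdOfCommutators (h.map freeGroupToCircleDeg1Lift)
  rw [map_pow, Units.val_pow_eq_pow_val, CircleDeg1Lift.translationNumber_pow,
    translationNumber_freeGroupToCircleDeg1Lift_commutator, mul_one] at this
  exact_mod_cast this

theorem one_half_le_scl_freeGroup_commutator :
    1 / 2 ≤ scl ⁅FreeGroup.of (0 : Fin 2), FreeGroup.of (1 : Fin 2)⁆ := by
  refine le_scl fun n => ?_
  have := le_two_mul_of_isProdOfCommutators_commutator_pow
    (isProdOfCommutators_commLength (isProdOfCommutators_commutator_pow _ _ (n + 1)))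
  have := (Nat.cast_le (α := ℝ)).2 this
  push_cast at this
  linarith

theorem free_group_scl_commutator :
    scl ⁅FreeGroup.of (0 : Fin 2), FreeGroup.of (1 : Fin 2)⁆ = 1 / 2 ∧
    0 < scl ⁅FreeGroup.of (0 : Fin 2), FreeGroup.of (1 : Fin 2)⁆ ∧
    ¬ ∃ N : ℕ, ∀ x : FreeGroup (Fin 2), x ∈ commutator (FreeGroup (Fin 2)) →
      ∃ m ≤ N, IsProdOfCommutators x m := by
  have hscl := le_antisymm (scl_commutator_le_one_half _ _) one_half_le_scl_freeGroup_commutator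
  refine ⟨hscl, by rw [hscl]; norm_num, ?_⟩
  rintro ⟨N, hN⟩
  have hc : ⁅FreeGroup.of (0 : Fin 2), FreeGroup.of (1 : Fin 2)⁆ ∈ commutator (FreeGroup (Fin 2)) :=
    Subgroup.commutator_mem_commutator (Subgroup.mem_top _) (Subgroup.mem_top _)
  obtain ⟨m, hmN, hm⟩ := hN _ (pow_mem hc (2 * N + 2))
  have := le_two_mul_of_isProdOfCommutators_commutator_pow hm
  omega
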